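/- The map sending F ∈ SSAF_σ(α) to the pair (β, F'), where F' is obtained from F by deleting all non-basement 1-cells and β is the shape of F', is a bijection between SSAF_σ(α) and the set of pairs (β, F') where β is σ-extendable to α and F' ∈ SSAF_σ(β) has no non-basement 1-cells. -/

import Mathlib

/-- A semi-skyline augmented filling of shape `α` with basement `σ`.
Entries are positive naturals; `σ i` as a value in `[n]` is `(σ i : ℕ) + 1`.
Conditions: positivity, basement, no descents, type A and type B inversion triples. -/
def IsSSAF (n : ℕ) (α : Fin n → ℕ) (σ : Equiv.Perm (Fin n)) (F : Fin n → ℕ → ℕ) : Prop :=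
  (∀ i j, j ≤ α i → 1 ≤ F i j) ∧
  (∀ i, F i 0 = (σ i : ℕ) + 1) ∧
  (∀ i j, j + 1 ≤ α i → F i (j + 1) ≤ F i j) ∧
  (∀ ℓ r : Fin n, ∀ i : ℕ, ℓ < r → α r ≤ α ℓ → i + 1 ≤ α r →
    ¬ (F ℓ (i + 1) ≤ F r (i + 1) ∧ F r (i + 1) ≤ F ℓ i)) ∧
  (∀ ℓ r : Fin n, ∀ i : ℕ, ℓ < r → α ℓ < α r → i ≤ α ℓ → i + 1 ≤ α r →
    ¬ (F r (i + 1) ≤ F ℓ i ∧ F ℓ i ≤ F r i))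

/-- The shape obtained by deleting all non-basement cells with entry `1`
(entries weakly decrease up a column, so such cells sit at the top):
`shapeDel α F i` is the number of non-basement cells of column `i` with entry at least `2`. -/
def shapeDel (n : ℕ) (α : Fin n → ℕ) (F : Fin n → ℕ → ℕ) (i : Fin n) : ℕ :=
  ((Finset.Icc 1 (α i)).filter (fun j => 2 ≤ F i j)).card

/-- `β` is `σ`-extendable to `α` (Definition 3.3). -/
def SigmaExtendable (n : ℕ) (σ : Equiv.Perm (Fin n)) (β α : Fin n → ℕ) : Prop :=
  (∀ i, β i ≤ α i) ∧
  ∀ ℓ r : Fin n, ℓ < r →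
    (α r ≤ α ℓ → β r ≤ β ℓ → α r ≤ β ℓ) ∧
    (α ℓ < α r → β ℓ < β r → α ℓ < β r) ∧
    (α r ≤ α ℓ → β ℓ < β r → α r = β r ∧ (σ ℓ : ℕ) < (σ r : ℕ)) ∧
    (α ℓ < α r → β r ≤ β ℓ → α ℓ = β ℓ ∧ (σ r : ℕ) < (σ ℓ : ℕ))

/-- The set of SSAFs of shape `α` with basement `σ`, with fillings normalized
to be `0` outside the cells of the diagram. -/
def SSAFSet (n : ℕ) (α : Fin n → ℕ) (σ : Equiv.Perm (Fin n)) : Set (Fin n → ℕ → ℕ) :=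
  {F | IsSSAF n α σ F ∧ ∀ i j, α i < j → F i j = 0}

/-- The map deleting all non-basement `1`-cells, recording the new shape. -/
def delMap (n : ℕ) (α : Fin n → ℕ) (F : Fin n → ℕ → ℕ) :
    (Fin n → ℕ) × (Fin n → ℕ → ℕ) :=
  (shapeDel n α F, fun i j => if j ≤ shapeDel n α F i then F i j else 0)

/-!
Columns of a semi-skyline augmented filling weakly decrease and have positive entries, so the
non-basement `1`-cells of a column form a segment at its top. Deleting them gives a filling of the
shape `β` counting the entries `≥ 2`, and putting the `1`s back on top is the inverse map; what
has to be checked is that both maps respect the inversion triples, and that the shapes `β` which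
occur are exactly the `σ`-extendable ones.

The triple conditions force strict inequalities between two columns `ℓ < r` to propagate:
downwards from the top of a column, where a `1`-cell faces a larger entry, and upwards from the
basement, where the entries are compared through `σ`. Moreover a type A pair never has equal
entries side by side, nor a type B pair `F r (k + 1) = F ℓ k`; applied to `1`-cells this yields the
shape conditions of `σ`-extendability, and the bottom of a downward chain yields those on `σ`.
-/

theorem le_card_filter_Icc_iff {f : ℕ → ℕ} {m j : ℕ} (c : ℕ) (hf : AntitoneOn f (Set.Icc 1 m))
    (hj : 1 ≤ j) (hjm : j ≤ m) :
    j ≤ ((Finset.Icc 1 m).filter fun k => c ≤ f k).card ↔ c ≤ f j := by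
  constructor
  · intro hle
    by_contra hlt
    have hsub : (Finset.Icc 1 m).filter (fun k => c ≤ f k) ⊆ Finset.Icc 1 (j - 1) := by
      intro k hk
      simp only [Finset.mem_filter, Finset.mem_Icc] at hk ⊢
      refine ⟨hk.1.1, Nat.le_sub_one_of_lt (lt_of_not_ge fun hjk => hlt ?_)⟩
      exact hk.2.trans (hf ⟨hj, hjm⟩ hk.1 hjk)
    have := Finset.card_le_card hsub
    rw [Nat.card_Icc] at this
    omega
  · intro hcj
    calc j = (Finset.Icc 1 j).card := by simp
      _ ≤ _ := Finset.card_le_card fun k hk => by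
        simp only [Finset.mem_filter, Finset.mem_Icc] at hk ⊢
        exact ⟨⟨hk.1, hk.2.trans hjm⟩, hcj.trans (hf ⟨hk.1, hk.2.trans hjm⟩ ⟨hj, hjm⟩ hk.2)⟩

theorem shapeDel_le (n : ℕ) (α : Fin n → ℕ) (F : Fin n → ℕ → ℕ) (i : Fin n) :
    shapeDel n α F i ≤ α i := by
  simpa [shapeDel] using Finset.card_filter_le (Finset.Icc 1 (α i)) fun j => 2 ≤ F i j

namespace IsSSAF

variable {n : ℕ} {α : Fin n → ℕ} {σ : Equiv.Perm (Fin n)} {F G : Fin n → ℕ → ℕ}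
  {ℓ r : Fin n} {i : Fin n} {j k : ℕ}

theorem one_le (hF : IsSSAF n α σ F) (hj : j ≤ α i) : 1 ≤ F i j := hF.1 i j hj

theorem basement (hF : IsSSAF n α σ F) (i : Fin n) : F i 0 = σ i + 1 := hF.2.1 i

theorem succ_le (hF : IsSSAF n α σ F) (hj : j + 1 ≤ α i) : F i (j + 1) ≤ F i j :=
  hF.2.2.1 i j hj

theorem antitoneOn (hF : IsSSAF n α σ F) (i : Fin n) : AntitoneOn (F i) (Set.Iic (α i)) :=
  antitoneOn_of_add_one_le Set.ordConnected_Iic fun _ _ _ hj => hF.succ_le hj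

theorem typeA (hF : IsSSAF n α σ F) (hlr : ℓ < r) (hα : α r ≤ α ℓ) (hk : k + 1 ≤ α r)
    (h : F ℓ (k + 1) ≤ F r (k + 1)) : F ℓ k < F r (k + 1) :=
  lt_of_not_ge fun h' => hF.2.2.2.1 ℓ r k hlr hα hk ⟨h, h'⟩

theorem typeB (hF : IsSSAF n α σ F) (hlr : ℓ < r) (hα : α ℓ < α r) (hk : k ≤ α ℓ)
    (hk' : k + 1 ≤ α r) (h : F r (k + 1) ≤ F ℓ k) : F r k < F ℓ k :=
  lt_of_not_ge fun h' => hF.2.2.2.2 ℓ r k hlr hα hk hk' ⟨h, h'⟩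

theorem congr (hF : IsSSAF n α σ F) (hFG : ∀ i j, j ≤ α i → F i j = G i j) :
    IsSSAF n α σ G := by
  obtain ⟨hpos, hbase, hsucc, hA, hB⟩ := hF
  refine ⟨fun i j hj => ?_, fun i => ?_, fun i j hj => ?_, fun ℓ r k hlr hα hk => ?_,
    fun ℓ r k hlr hα hk hk' => ?_⟩
  · rw [← hFG i j hj]; exact hpos i j hj
  · rw [← hFG i 0 (Nat.zero_le _)]; exact hbase i
  · rw [← hFG i j (by omega), ← hFG i (j + 1) hj]; exact hsucc i j hj
  · rw [← hFG ℓ k (by omega), ← hFG ℓ (k + 1) (by omega), ← hFG r (k + 1) hk]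
    exact hA ℓ r k hlr hα hk
  · rw [← hFG ℓ k hk, ← hFG r k (by omega), ← hFG r (k + 1) hk']
    exact hB ℓ r k hlr hα hk hk'

theorem ne_of_typeA (hF : IsSSAF n α σ F) (hlr : ℓ < r) (hα : α r ≤ α ℓ) (hk : k + 1 ≤ α r) :
    F ℓ (k + 1) ≠ F r (k + 1) := fun h => by
  have := hF.typeA hlr hα hk h.le
  have := hF.succ_le (i := ℓ) (j := k) (by omega)
  omega

theorem ne_of_typeB (hF : IsSSAF n α σ F) (hlr : ℓ < r) (hα : α ℓ < α r) (hk : k ≤ α ℓ) :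
    F r (k + 1) ≠ F ℓ k := fun h => by
  have := hF.typeB hlr hα hk (by omega) h.le
  have := hF.succ_le (i := r) (j := k) (by omega)
  omega

/-- Induction downwards: `F ℓ (j + 1) < F r (j + 2) ≤ F r (j + 1)` is the hypothesis of the triple
condition at height `j`. -/
theorem lt_succ_of_typeA (hF : IsSSAF n α σ F) (hlr : ℓ < r) (hα : α r ≤ α ℓ) {m : ℕ}
    (hm : m + 1 ≤ α r) (htop : F ℓ (m + 1) ≤ F r (m + 1)) (hj : j ≤ m) :
    F ℓ j < F r (j + 1) := by
  induction hj using Nat.decreasingInduction with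
  | self => exact hF.typeA hlr hα hm htop
  | of_succ k hk ih =>
    have := hF.succ_le (i := r) (j := k + 1) (by omega)
    exact hF.typeA hlr hα (by omega) (by omega)

theorem lt_of_typeB (hF : IsSSAF n α σ F) (hlr : ℓ < r) (hα : α ℓ < α r) {m : ℕ}
    (hm : m ≤ α ℓ) (htop : F r (m + 1) ≤ F ℓ m) (hj : j ≤ m) : F r j < F ℓ j := by
  induction hj using Nat.decreasingInduction with
  | self => exact hF.typeB hlr hα hm (by omega) htop
  | of_succ k hk ih =>
    have := hF.succ_le (i := ℓ) (j := k) (by omega)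
    exact hF.typeB hlr hα (by omega) (by omega) (by omega)

theorem lt_of_typeA_of_basement_lt (hF : IsSSAF n α σ F) (hlr : ℓ < r) (hα : α r ≤ α ℓ)
    (hσ : (σ r : ℕ) < σ ℓ) (hj : j ≤ α r) : F r j < F ℓ j := by
  induction j with
  | zero => rw [hF.basement, hF.basement]; omega
  | succ k ih =>
    have := ih (by omega)
    have := hF.succ_le (i := r) (j := k) hj
    exact lt_of_not_ge fun h => absurd (hF.typeA hlr hα hj h) (by omega)

theorem lt_of_typeB_of_basement_lt (hF : IsSSAF n α σ F) (hlr : ℓ < r) (hα : α ℓ < α r)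
    (hσ : (σ ℓ : ℕ) < σ r) (hj : j ≤ α ℓ) : F ℓ j < F r j := by
  induction j with
  | zero => rw [hF.basement, hF.basement]; omega
  | succ k ih =>
    have := ih (by omega)
    have := hF.succ_le (i := ℓ) (j := k) hj
    have : F ℓ k < F r (k + 1) :=
      lt_of_not_ge fun h => absurd (hF.typeB hlr hα (by omega) (by omega) h) (by omega)
    omega

theorem le_shapeDel_iff (hF : IsSSAF n α σ F) (hj : 1 ≤ j) (hjα : j ≤ α i) :
    j ≤ shapeDel n α F i ↔ 2 ≤ F i j :=
  le_card_filter_Icc_iff 2 ((hF.antitoneOn i).mono Set.Icc_subset_Iic_self) hj hjα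

theorem two_le_of_le_shapeDel (hF : IsSSAF n α σ F) (hj : 1 ≤ j) (hjβ : j ≤ shapeDel n α F i) :
    2 ≤ F i j :=
  (hF.le_shapeDel_iff hj (hjβ.trans (shapeDel_le n α F i))).mp hjβ

theorem eq_one_of_shapeDel_lt (hF : IsSSAF n α σ F) (hβj : shapeDel n α F i < j)
    (hjα : j ≤ α i) : F i j = 1 := by
  have := mt (hF.le_shapeDel_iff (by omega) hjα).mpr (by omega)
  have := hF.one_le hjα
  omega

theorem shapeDel_eq_of_typeB (hF : IsSSAF n α σ F) (hlr : ℓ < r) (hα : α ℓ < α r)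
    (hβ : shapeDel n α F r ≤ shapeDel n α F ℓ) : shapeDel n α F ℓ = α ℓ := by
  have := shapeDel_le n α F ℓ
  by_contra hne
  refine hF.ne_of_typeB hlr hα le_rfl ?_
  rw [hF.eq_one_of_shapeDel_lt (i := r) (by omega) (by omega),
    hF.eq_one_of_shapeDel_lt (i := ℓ) (by omega) le_rfl]

theorem lt_of_typeB_of_shapeDel_le (hF : IsSSAF n α σ F) (hlr : ℓ < r) (hα : α ℓ < α r)
    (hβ : shapeDel n α F r ≤ shapeDel n α F ℓ) (hj : j ≤ shapeDel n α F ℓ) : F r j < F ℓ j := by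
  have hℓ := shapeDel_le n α F ℓ
  refine hF.lt_of_typeB hlr hα hℓ ?_ hj
  rw [hF.eq_one_of_shapeDel_lt (i := r) (by omega) (by omega)]
  exact hF.one_le hℓ

theorem lt_succ_of_typeA_of_shapeDel_lt (hF : IsSSAF n α σ F) (hlr : ℓ < r) (hα : α r ≤ α ℓ)
    (hβ : shapeDel n α F ℓ < shapeDel n α F r) (hj : j ≤ shapeDel n α F ℓ) :
    F ℓ j < F r (j + 1) := by
  have hr := shapeDel_le n α F r
  refine hF.lt_succ_of_typeA hlr hα (by omega) ?_ hj
  rw [hF.eq_one_of_shapeDel_lt (i := ℓ) (by omega) (by omega)]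
  exact hF.one_le (by omega)

theorem sigmaExtendable_shapeDel (hF : IsSSAF n α σ F) :
    SigmaExtendable n σ (shapeDel n α F) α := by
  refine ⟨shapeDel_le n α F, fun ℓ r hlr => ⟨fun hα hβ => ?_, fun hα hβ => ?_,
    fun hα hβ => ⟨?_, ?_⟩, fun hα hβ => ⟨(hF.shapeDel_eq_of_typeB hlr hα hβ).symm, ?_⟩⟩⟩
  all_goals have hℓ := shapeDel_le n α F ℓ; have hr := shapeDel_le n α F r
  · by_contra! h
    refine hF.ne_of_typeA hlr hα h ?_
    rw [hF.eq_one_of_shapeDel_lt (i := ℓ) (by omega) (by omega),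
      hF.eq_one_of_shapeDel_lt (i := r) (by omega) (by omega)]
  · by_contra! h
    refine hF.ne_of_typeB hlr hα h ?_
    rw [hF.eq_one_of_shapeDel_lt (i := r) (by omega) (by omega),
      hF.eq_one_of_shapeDel_lt (i := ℓ) (by omega) (by omega)]
  · by_contra h
    refine hF.ne_of_typeA (k := shapeDel n α F r) hlr hα (by omega) ?_
    rw [hF.eq_one_of_shapeDel_lt (i := ℓ) (by omega) (by omega),
      hF.eq_one_of_shapeDel_lt (i := r) (by omega) (by omega)]
  · have := hF.lt_succ_of_typeA_of_shapeDel_lt hlr hα hβ (Nat.zero_le _)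
    have := hF.succ_le (i := r) (j := 0) (by omega)
    have := hF.basement ℓ
    have := hF.basement r
    omega
  · have := hF.lt_of_typeB_of_shapeDel_le hlr hα hβ (Nat.zero_le _)
    have := hF.basement ℓ
    have := hF.basement r
    omega

theorem restrict_shapeDel (hF : IsSSAF n α σ F) : IsSSAF n (shapeDel n α F) σ F := by
  have hle := shapeDel_le n α F
  refine ⟨fun i j hj => hF.one_le (hj.trans (hle i)), hF.basement,
    fun i j hj => hF.succ_le (hj.trans (hle i)), fun ℓ r k hlr hβ hk => ?_,
    fun ℓ r k hlr hβ hk hk' => ?_⟩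
  · rintro ⟨h, h'⟩
    rcases le_or_gt (α r) (α ℓ) with hα | hα
    · exact absurd (hF.typeA hlr hα (hk.trans (hle r)) h) (by omega)
    · have := hF.lt_of_typeB_of_shapeDel_le hlr hα hβ (j := k + 1) (by omega)
      omega
  · rintro ⟨h, h'⟩
    rcases lt_or_ge (α ℓ) (α r) with hα | hα
    · exact absurd (hF.typeB hlr hα (hk.trans (hle ℓ)) (hk'.trans (hle r)) h) (by omega)
    · have := hF.lt_succ_of_typeA_of_shapeDel_lt hlr hα hβ hk
      omega

end IsSSAF

def extendablePairs (n : ℕ) (α : Fin n → ℕ) (σ : Equiv.Perm (Fin n)) :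
    Set ((Fin n → ℕ) × (Fin n → ℕ → ℕ)) :=
  {p | SigmaExtendable n σ p.1 α ∧ p.2 ∈ SSAFSet n p.1 σ ∧
    ∀ i j, 1 ≤ j → j ≤ p.1 i → p.2 i j ≠ 1}

def fillOnes (n : ℕ) (α β : Fin n → ℕ) (F' : Fin n → ℕ → ℕ) : Fin n → ℕ → ℕ :=
  fun i j => if j ≤ β i then F' i j else if j ≤ α i then 1 else 0

section fillOnes

variable {n : ℕ} {α β : Fin n → ℕ} {σ : Equiv.Perm (Fin n)} {F F' : Fin n → ℕ → ℕ}
  {ℓ r : Fin n} {i : Fin n} {j k : ℕ}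

theorem fillOnes_of_le (h : j ≤ β i) : fillOnes n α β F' i j = F' i j := if_pos h

theorem fillOnes_of_lt_of_le (h : β i < j) (h' : j ≤ α i) : fillOnes n α β F' i j = 1 := by
  simp only [fillOnes, if_neg (not_le.mpr h), if_pos h']

theorem fillOnes_of_lt (hβα : β i ≤ α i) (h : α i < j) : fillOnes n α β F' i j = 0 := by
  simp only [fillOnes, if_neg (show ¬ j ≤ β i by omega), if_neg (not_le.mpr h)]

theorem shapeDel_fillOnes (hβα : ∀ i, β i ≤ α i) (h2 : ∀ i j, 1 ≤ j → j ≤ β i → 2 ≤ F' i j) :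
    shapeDel n α (fillOnes n α β F') = β := by
  funext i
  have hfilter : (Finset.Icc 1 (α i)).filter (fun j => 2 ≤ fillOnes n α β F' i j) =
      Finset.Icc 1 (β i) := by
    ext j
    simp only [Finset.mem_filter, Finset.mem_Icc]
    constructor
    · rintro ⟨⟨hj, hjα⟩, h⟩
      refine ⟨hj, not_lt.mp fun hβj => ?_⟩
      rw [fillOnes_of_lt_of_le hβj hjα] at h
      omega
    · rintro ⟨hj, hjβ⟩
      exact ⟨⟨hj, hjβ.trans (hβα i)⟩, (fillOnes_of_le hjβ).symm ▸ h2 i j hj hjβ⟩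
  rw [shapeDel, hfilter, Nat.card_Icc, Nat.add_sub_cancel]

theorem fillOnes_typeA (hext : SigmaExtendable n σ β α) (hF' : IsSSAF n β σ F')
    (h2 : ∀ i j, 1 ≤ j → j ≤ β i → 2 ≤ F' i j) (hlr : ℓ < r) (hα : α r ≤ α ℓ)
    (hk : k + 1 ≤ α r) :
    ¬ (fillOnes n α β F' ℓ (k + 1) ≤ fillOnes n α β F' r (k + 1) ∧
      fillOnes n α β F' r (k + 1) ≤ fillOnes n α β F' ℓ k) := by
  obtain ⟨hβα, hpair⟩ := hext
  obtain ⟨h1, -, h3, -⟩ := hpair ℓ r hlr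
  rintro ⟨h, h'⟩
  rcases le_or_gt (β r) (β ℓ) with hβ | hβ
  · have := h1 hα hβ
    by_cases hkr : k + 1 ≤ β r
    · rw [fillOnes_of_le (by omega), fillOnes_of_le hkr] at h
      rw [fillOnes_of_le hkr, fillOnes_of_le (by omega)] at h'
      exact absurd (hF'.typeA hlr hβ hkr h) (by omega)
    · rw [fillOnes_of_le (i := ℓ) (by omega), fillOnes_of_lt_of_le (by omega) hk] at h
      have := h2 ℓ (k + 1) (by omega) (by omega)
      omega
  · obtain ⟨hαβ, hσ⟩ := h3 hα hβ
    rw [fillOnes_of_le (i := r) (by omega)] at h'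
    have := h2 r (k + 1) (by omega) (by omega)
    by_cases hkℓ : k ≤ β ℓ
    · rw [fillOnes_of_le hkℓ] at h'
      have := hF'.lt_of_typeB_of_basement_lt hlr hβ hσ hkℓ
      exact absurd (hF'.typeB hlr hβ hkℓ (by omega) h') (by omega)
    · rw [fillOnes_of_lt_of_le (by omega) (by omega)] at h'
      omega

theorem fillOnes_typeB (hext : SigmaExtendable n σ β α) (hF' : IsSSAF n β σ F')
    (h2 : ∀ i j, 1 ≤ j → j ≤ β i → 2 ≤ F' i j) (hlr : ℓ < r) (hα : α ℓ < α r)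
    (hk : k ≤ α ℓ) (hk' : k + 1 ≤ α r) :
    ¬ (fillOnes n α β F' r (k + 1) ≤ fillOnes n α β F' ℓ k ∧
      fillOnes n α β F' ℓ k ≤ fillOnes n α β F' r k) := by
  obtain ⟨hβα, hpair⟩ := hext
  obtain ⟨-, h2', -, h4⟩ := hpair ℓ r hlr
  rintro ⟨h, h'⟩
  rcases lt_or_ge (β ℓ) (β r) with hβ | hβ
  · have := h2' hα hβ
    rw [fillOnes_of_le (i := r) (by omega)] at h
    have := h2 r (k + 1) (by omega) (by omega)
    by_cases hkℓ : k ≤ β ℓ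
    · rw [fillOnes_of_le hkℓ] at h h'
      rw [fillOnes_of_le (i := r) (by omega)] at h'
      exact absurd (hF'.typeB hlr hβ hkℓ (by omega) h) (by omega)
    · rw [fillOnes_of_lt_of_le (not_le.mp hkℓ) hk] at h
      omega
  · obtain ⟨hαβ, hσ⟩ := h4 hα hβ
    rw [fillOnes_of_le (i := ℓ) (by omega)] at h'
    by_cases hkr : k ≤ β r
    · rw [fillOnes_of_le hkr] at h'
      have := hF'.lt_of_typeA_of_basement_lt hlr hβ hσ hkr
      omega
    · rw [fillOnes_of_lt_of_le (not_le.mp hkr) (by omega)] at h'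
      have := h2 ℓ k (by omega) (by omega)
      omega

theorem isSSAF_fillOnes (hext : SigmaExtendable n σ β α) (hF' : IsSSAF n β σ F')
    (h2 : ∀ i j, 1 ≤ j → j ≤ β i → 2 ≤ F' i j) : IsSSAF n α σ (fillOnes n α β F') := by
  have hpos : ∀ i j, j ≤ α i → 1 ≤ fillOnes n α β F' i j := fun i j hj => by
    rcases le_or_gt j (β i) with h | h
    · rw [fillOnes_of_le h]; exact hF'.one_le h
    · rw [fillOnes_of_lt_of_le h hj]
  refine ⟨hpos, fun i => ?_, fun i j hj => ?_,
    fun ℓ r k hlr hα hk => fillOnes_typeA hext hF' h2 hlr hα hk,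
    fun ℓ r k hlr hα hk hk' => fillOnes_typeB hext hF' h2 hlr hα hk hk'⟩
  · rw [fillOnes_of_le (Nat.zero_le _)]; exact hF'.basement i
  · rcases le_or_gt (j + 1) (β i) with h | h
    · rw [fillOnes_of_le h, fillOnes_of_le (by omega)]; exact hF'.succ_le h
    · rw [fillOnes_of_lt_of_le h hj]; exact hpos i j (by omega)

theorem two_le_of_mem_extendablePairs {p : (Fin n → ℕ) × (Fin n → ℕ → ℕ)}
    (hp : p ∈ extendablePairs n α σ) : ∀ i j, 1 ≤ j → j ≤ p.1 i → 2 ≤ p.2 i j := fun i j hj hjβ => by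
  have := hp.2.1.1.one_le hjβ
  have := hp.2.2 i j hj hjβ
  omega

theorem fillOnes_mem_SSAFSet {p : (Fin n → ℕ) × (Fin n → ℕ → ℕ)}
    (hp : p ∈ extendablePairs n α σ) : fillOnes n α p.1 p.2 ∈ SSAFSet n α σ :=
  ⟨isSSAF_fillOnes hp.1 hp.2.1.1 (two_le_of_mem_extendablePairs hp),
    fun i _ hj => fillOnes_of_lt (hp.1.1 i) hj⟩

theorem delMap_fillOnes {p : (Fin n → ℕ) × (Fin n → ℕ → ℕ)} (hp : p ∈ extendablePairs n α σ) :
    delMap n α (fillOnes n α p.1 p.2) = p := by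
  rw [delMap, shapeDel_fillOnes hp.1.1 (two_le_of_mem_extendablePairs hp)]
  refine Prod.ext rfl (funext₂ fun i j => ?_)
  dsimp only
  rcases le_or_gt j (p.1 i) with h | h
  · rw [if_pos h, fillOnes_of_le h]
  · rw [if_neg (not_le.mpr h), hp.2.1.2 i j h]

theorem fillOnes_delMap (hF : F ∈ SSAFSet n α σ) :
    fillOnes n α (shapeDel n α F) (delMap n α F).2 = F := by
  funext i j
  rcases le_or_gt j (shapeDel n α F i) with h | h
  · rw [fillOnes_of_le h]; exact if_pos h
  · rcases le_or_gt j (α i) with h' | h'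
    · rw [fillOnes_of_lt_of_le h h', hF.1.eq_one_of_shapeDel_lt h h']
    · rw [fillOnes_of_lt (shapeDel_le n α F i) h', hF.2 i j h']

theorem delMap_mem_extendablePairs (hF : F ∈ SSAFSet n α σ) :
    delMap n α F ∈ extendablePairs n α σ := by
  obtain ⟨hF, -⟩ := hF
  refine ⟨hF.sigmaExtendable_shapeDel,
    ⟨hF.restrict_shapeDel.congr fun i j hj => (if_pos hj).symm, fun i j hj => if_neg (not_le.mpr hj)⟩,
    fun i j hj hjβ => ?_⟩
  dsimp only [delMap] at hjβ ⊢
  have := hF.two_le_of_le_shapeDel hj hjβ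
  rw [if_pos hjβ]
  omega

end fillOnes

theorem stmt9 (n : ℕ) (α : Fin n → ℕ) (σ : Equiv.Perm (Fin n)) :
    Set.BijOn (delMap n α) (SSAFSet n α σ)
      {p : (Fin n → ℕ) × (Fin n → ℕ → ℕ) |
        SigmaExtendable n σ p.1 α ∧ p.2 ∈ SSAFSet n p.1 σ ∧
        ∀ i j, 1 ≤ j → j ≤ p.1 i → p.2 i j ≠ 1} :=
  Set.InvOn.bijOn (f' := fun p => fillOnes n α p.1 p.2)
    ⟨fun _ hF => fillOnes_delMap hF, fun _ hp => delMap_fillOnes hp⟩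
    (fun _ hF => delMap_mem_extendablePairs hF) (fun _ hp => fillOnes_mem_SSAFSet hp)
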